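/- arXiv:2603.09947 — 7 statements merged into one kernel-verified Lean document; each statement's English description precedes it below -/
import Mathlib

section
/- Let (Ω, P) be a probability space, acc : Ω → {0,1}, and c : Ω → [0,1]. Then selective accuracy SA(t) = E[acc | c ≥ t] is monotonically non-decreasing in t (over thresholds with positive coverage) if and only if condition C2 holds: for all a < b with P(a ≤ c < b) > 0 and P(c ≥ b) > 0, E[acc | a ≤ c < b] ≤ E[acc | c ≥ b]. -/
open MeasureTheory

/-- Selective accuracy: conditional expectation of `acc` given confidence at least `t`. -/
noncomputable def SA {Ω : Type*} [MeasurableSpace Ω] (P : Measure Ω) (acc c : Ω → ℝ) (t : ℝ) : ℝ :=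
  ⨍ ω in {ω | t ≤ c ω}, acc ω ∂P

/-!
For `a ≤ b` the event `{a ≤ c}` is the disjoint union of the band `{a ≤ c < b}` and `{b ≤ c}`,
so when both pieces have positive mass, `SA a` is a strict convex combination of the band average
and `SA b`; hence `SA a ≤ SA b` exactly when the band average is at most `SA b`. A null band
leaves `SA` unchanged, and a band of positive mass forces `a < b`.
-/

theorem le_right_iff_of_mem_openSegment {𝕜 : Type*} [Field 𝕜] [LinearOrder 𝕜]
    [IsStrictOrderedRing 𝕜] {x y z : 𝕜} (h : x ∈ openSegment 𝕜 y z) : x ≤ z ↔ y ≤ z := by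
  rcases lt_trichotomy y z with hyz | rfl | hzy
  · rw [openSegment_eq_Ioo hyz] at h
    exact iff_of_true h.2.le hyz.le
  · rw [openSegment_same] at h
    rw [h]
  · rw [openSegment_symm, openSegment_eq_Ioo hzy] at h
    exact iff_of_false h.1.not_ge hzy.not_ge

section Average

variable {α : Type*} [MeasurableSpace α] {μ : Measure α} {f : α → ℝ} {s t : Set α}

theorem average_union_le_right_iff (hd : AEDisjoint μ s t) (ht : NullMeasurableSet t μ)
    (hs₀ : μ s ≠ 0) (ht₀ : μ t ≠ 0) (hsμ : μ s ≠ ⊤) (htμ : μ t ≠ ⊤)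
    (hfs : IntegrableOn f s μ) (hft : IntegrableOn f t μ) :
    ⨍ x in s ∪ t, f x ∂μ ≤ ⨍ x in t, f x ∂μ ↔ ⨍ x in s, f x ∂μ ≤ ⨍ x in t, f x ∂μ :=
  le_right_iff_of_mem_openSegment
    (average_union_mem_openSegment hd ht hs₀ ht₀ hsμ htμ hfs hft)

theorem setAverage_union_of_measure_zero_left (hs : μ s = 0) :
    ⨍ x in s ∪ t, f x ∂μ = ⨍ x in t, f x ∂μ := by
  rw [setAverage_congr ((ae_eq_empty.2 hs).union (Filter.EventuallyEq.refl _ t)), Set.empty_union]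

end Average

theorem setOf_le_eq_band_union {Ω : Type*} {c : Ω → ℝ} {a b : ℝ} (hab : a ≤ b) :
    {ω | a ≤ c ω} = {ω | a ≤ c ω ∧ c ω < b} ∪ {ω | b ≤ c ω} :=
  congrArg (c ⁻¹' ·) (Set.Ico_union_Ici_eq_Ici hab).symm

section Threshold

variable {Ω : Type*} [MeasurableSpace Ω] {μ : Measure Ω} {f c : Ω → ℝ} {a b : ℝ}

theorem setAverage_le_iff_band_le [IsFiniteMeasure μ] (hf : Integrable f μ) (hc : Measurable c)
    (hab : a ≤ b) (hband : μ {ω | a ≤ c ω ∧ c ω < b} ≠ 0) (hupper : μ {ω | b ≤ c ω} ≠ 0) :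
    ⨍ ω in {ω | a ≤ c ω}, f ω ∂μ ≤ ⨍ ω in {ω | b ≤ c ω}, f ω ∂μ ↔
      ⨍ ω in {ω | a ≤ c ω ∧ c ω < b}, f ω ∂μ ≤ ⨍ ω in {ω | b ≤ c ω}, f ω ∂μ := by
  have hdisj : Disjoint {ω | a ≤ c ω ∧ c ω < b} {ω | b ≤ c ω} :=
    Set.disjoint_left.2 fun _ hω hω' => hω.2.not_ge hω'
  rw [setOf_le_eq_band_union hab]
  exact average_union_le_right_iff hdisj.aedisjoint
    (measurableSet_le measurable_const hc).nullMeasurableSet hband hupper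
    (measure_ne_top _ _) (measure_ne_top _ _) hf.integrableOn hf.integrableOn

theorem setAverage_eq_of_band_null (hab : a ≤ b) (hband : μ {ω | a ≤ c ω ∧ c ω < b} = 0) :
    ⨍ ω in {ω | a ≤ c ω}, f ω ∂μ = ⨍ ω in {ω | b ≤ c ω}, f ω ∂μ := by
  rw [setOf_le_eq_band_union hab, setAverage_union_of_measure_zero_left hband]

end Threshold

theorem confidence_gate_theorem_general
    {Ω : Type*} [MeasurableSpace Ω] (P : Measure Ω) [IsProbabilityMeasure P]
    (acc c : Ω → ℝ) (hma : Measurable acc) (hmc : Measurable c)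
    (hacc : ∀ ω, acc ω = 0 ∨ acc ω = 1) :
    (∀ t₁ t₂ : ℝ, t₁ ≤ t₂ →
        0 < P {ω | t₁ ≤ c ω} → 0 < P {ω | t₂ ≤ c ω} →
        SA P acc c t₁ ≤ SA P acc c t₂)
      ↔ (∀ a b : ℝ, a < b →
          0 < P {ω | a ≤ c ω ∧ c ω < b} → 0 < P {ω | b ≤ c ω} →
          ⨍ ω in {ω | a ≤ c ω ∧ c ω < b}, acc ω ∂P ≤ ⨍ ω in {ω | b ≤ c ω}, acc ω ∂P) := by
  have hint : Integrable acc P :=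
    Integrable.of_bound hma.aestronglyMeasurable 1
      (.of_forall fun ω => by rcases hacc ω with h | h <;> simp [h])
  constructor
  · intro hmono a b hab hband hupper
    have hlower : 0 < P {ω | a ≤ c ω} := hband.trans_le (measure_mono fun _ hω => hω.1)
    exact (setAverage_le_iff_band_le hint hmc hab.le hband.ne' hupper.ne').1
      (hmono a b hab.le hlower hupper)
  · intro hC2 t₁ t₂ h12 _ hupper
    by_cases hband : P {ω | t₁ ≤ c ω ∧ c ω < t₂} = 0
    · exact (setAverage_eq_of_band_null h12 hband).le
    · obtain ⟨ω, hω⟩ := nonempty_of_measure_ne_zero hband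
      exact (setAverage_le_iff_band_le hint hmc h12 hband hupper.ne').2
        (hC2 t₁ t₂ (hω.1.trans_lt hω.2) (pos_iff_ne_zero.2 hband) hupper)

/-- Confidence Gate Theorem: selective accuracy is monotone non-decreasing over
thresholds with positive coverage if and only if C2 (no inversion zones) holds. -/
theorem confidence_gate_theorem
    {Ω : Type*} [MeasurableSpace Ω] (P : Measure Ω) [IsProbabilityMeasure P]
    (acc c : Ω → ℝ) (hma : Measurable acc) (hmc : Measurable c)
    (hacc : ∀ ω, acc ω = 0 ∨ acc ω = 1) (hc : ∀ ω, c ω ∈ Set.Icc (0 : ℝ) 1) :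
    (∀ t₁ t₂ : ℝ, t₁ ≤ t₂ →
        0 < P {ω | t₁ ≤ c ω} → 0 < P {ω | t₂ ≤ c ω} →
        SA P acc c t₁ ≤ SA P acc c t₂)
      ↔ (∀ a b : ℝ, a < b →
          0 < P {ω | a ≤ c ω ∧ c ω < b} → 0 < P {ω | b ≤ c ω} →
          ⨍ ω in {ω | a ≤ c ω ∧ c ω < b}, acc ω ∂P ≤ ⨍ ω in {ω | b ≤ c ω}, acc ω ∂P) :=
  confidence_gate_theorem_general P acc c hma hmc hacc
end

section
/- There exists a finite probability space Ω, functions acc : Ω → {0,1} and c : Ω → [0,1], such that condition C2 holds (for all a < b with both relevant events having positive probability, E[acc | a ≤ c < b] ≤ E[acc | c ≥ b]) but condition C1 fails: there exist ω₁, ω₂ with c(ω₁) > c(ω₂) and acc(ω₁) < acc(ω₂). -/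
open scoped Classical BigOperators

/-- Probability of the event `S` on a finite space with mass function `p`. -/
noncomputable def pr {Ω : Type*} [Fintype Ω] (p : Ω → ℝ) (S : Ω → Prop) : ℝ :=
  ∑ ω, if S ω then p ω else 0

/-- Conditional expectation of `acc` given the event `S` on a finite space. -/
noncomputable def cexp {Ω : Type*} [Fintype Ω] (p acc : Ω → ℝ) (S : Ω → Prop) : ℝ :=
  (∑ ω, if S ω then p ω * acc ω else 0) / pr p S

/-! Take four equally likely outcomes, two at confidence `0` and two at confidence `1`, each pair
containing one correct and one incorrect answer. Then correct-at-`0` versus incorrect-at-`1` is a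
pointwise inversion, but every band `[a, b)` and upper set `[b, ∞)` that are both nonempty must be
the level sets `{c = 0}` and `{c = 1}`, on which the average accuracy is `1/2` alike. -/

theorem exists_of_pr_pos {Ω : Type*} [Fintype Ω] {p : Ω → ℝ} {S : Ω → Prop}
    (h : 0 < pr p S) : ∃ ω, S ω := by
  by_contra! hS
  have : pr p S = 0 := Finset.sum_eq_zero fun ω _ => if_neg (hS ω)
  linarith

theorem band_and_upper_eq_levels_of_binary {Ω : Type*} {c : Ω → ℝ}
    (hc : ∀ ω, c ω = 0 ∨ c ω = 1) {a b : ℝ}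
    (hband : ∃ ω, a ≤ c ω ∧ c ω < b) (hupper : ∃ ω, b ≤ c ω) :
    (fun ω => a ≤ c ω ∧ c ω < b) = (fun ω => c ω = 0) ∧
      (fun ω => b ≤ c ω) = (fun ω => c ω = 1) := by
  obtain ⟨ω₀, ha, hb⟩ := hband
  obtain ⟨ω₁, hb₁⟩ := hupper
  have hb_le : b ≤ 1 := by rcases hc ω₁ with h | h <;> linarith
  have ha_le : a ≤ 0 := by rcases hc ω₀ with h | h <;> linarith
  have hb_pos : 0 < b := by rcases hc ω₀ with h | h <;> linarith
  have hb_not_gt : ¬ 1 < b := not_lt.2 hb_le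
  have hb_not_le : ¬ b ≤ 0 := not_le.2 hb_pos
  constructor <;> funext ω <;> rcases hc ω with h | h <;>
    simp [h, ha_le, hb_pos, hb_le, hb_not_gt, hb_not_le]

noncomputable def exampleMass : Fin 4 → ℝ := fun _ => 1 / 4

def exampleAcc : Fin 4 → ℝ := ![0, 1, 0, 1]

def exampleConf : Fin 4 → ℝ := ![0, 0, 1, 1]

theorem exampleConf_binary (ω : Fin 4) : exampleConf ω = 0 ∨ exampleConf ω = 1 := by
  fin_cases ω <;> simp [exampleConf]

theorem cexp_example_level (v : ℝ) (hv : v = 0 ∨ v = 1) :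
    cexp exampleMass exampleAcc (fun ω => exampleConf ω = v) = 1 / 2 := by
  rcases hv with rfl | rfl <;>
    simp [cexp, pr, exampleMass, exampleAcc, exampleConf, Fin.sum_univ_four] <;> norm_num

/-- Converse failure of "C1 implies C2": there is a finite probability space where the
aggregate no-inversion condition C2 holds but pointwise rank-alignment C1 fails. -/
theorem c2_does_not_imply_c1 :
    ∃ (n : ℕ) (p acc c : Fin n → ℝ),
      (∀ ω, 0 < p ω) ∧ (∑ ω, p ω = 1) ∧
      (∀ ω, acc ω = 0 ∨ acc ω = 1) ∧ (∀ ω, c ω ∈ Set.Icc (0 : ℝ) 1) ∧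
      (∀ a b : ℝ, a < b →
        0 < pr p (fun ω => a ≤ c ω ∧ c ω < b) →
        0 < pr p (fun ω => b ≤ c ω) →
        cexp p acc (fun ω => a ≤ c ω ∧ c ω < b) ≤ cexp p acc (fun ω => b ≤ c ω)) ∧
      (∃ ω₁ ω₂, c ω₂ < c ω₁ ∧ acc ω₁ < acc ω₂) := by
  refine ⟨4, exampleMass, exampleAcc, exampleConf, fun _ => by norm_num [exampleMass],
    by norm_num [exampleMass], ?_, ?_, ?_, ⟨2, 1, by simp [exampleConf, exampleAcc]⟩⟩
  · intro ω; fin_cases ω <;> simp [exampleAcc]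
  · intro ω; rcases exampleConf_binary ω with h | h <;> norm_num [h]
  · intro a b _ hband hupper
    obtain ⟨hband_eq, hupper_eq⟩ := band_and_upper_eq_levels_of_binary exampleConf_binary
      (exists_of_pr_pos hband) (exists_of_pr_pos hupper)
    rw [hband_eq, hupper_eq, cexp_example_level 0 (Or.inl rfl), cexp_example_level 1 (Or.inr rfl)]
end

section
/- Let Ω be a finite probability space, acc : Ω → {0,1}, c : Ω → [0,1]. Suppose the confidence values take finitely many distinct values v₁ < v₂ < ... < v_k, each with positive probability, and let a_i = E[acc | c = v_i] denote the level-set accuracies. Then C2 holds if and only if for every i, a_i ≤ (Σ_{j>i} P(c = v_j) a_j) / (Σ_{j>i} P(c = v_j)) whenever i < k; and if the sequence (a_i) is non-decreasing in i, then C2 holds. -/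
/-!
Grouping outcomes by confidence level writes every conditional accuracy as the average of the
level accuracies `aᵢ` weighted by the level probabilities `P(c = vᵢ)`. The band `[vᵢ, vᵢ₊₁)`
then shows that C2 forces `aᵢ ≤ Tᵢ`, where `Tᵢ` is the average accuracy of the levels above `i`.
Conversely, `Tᵢ₋₁` is an average of `aᵢ` and `Tᵢ`, so these level conditions make the tail
averages `Tᵢ` nondecreasing. Hence `aⱼ ≤ Tᵢ` for all `j ≤ i`, and a band `[a, b)` whose highest
level is `i` has average accuracy at most `Tᵢ`, the accuracy of the region `c ≥ b`.
-/

open scoped Classical BigOperators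

open Finset

section CenterMass

variable {ι : Type*} {w a : ι → ℝ} {s : Finset ι}

lemma centerMass_le_of_forall_le (hw : ∀ i ∈ s, 0 < w i) (hs : s.Nonempty) {t : ℝ}
    (h : ∀ i ∈ s, a i ≤ t) : s.centerMass w a ≤ t :=
  (centerMass_le_sup (fun i hi => (hw i hi).le) (sum_pos hw hs)).trans (sup'_le _ _ h)

lemma le_centerMass_of_forall_le (hw : ∀ i ∈ s, 0 < w i) (hs : s.Nonempty) {t : ℝ}
    (h : ∀ i ∈ s, t ≤ a i) : t ≤ s.centerMass w a :=
  (le_inf' _ _ h).trans (inf_le_centerMass (fun i hi => (hw i hi).le) (sum_pos hw hs))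

lemma centerMass_insert_le [DecidableEq ι] {i : ι} (hi : i ∉ s) (hw : ∀ j ∈ insert i s, 0 < w j)
    (hs : s.Nonempty) (h : a i ≤ s.centerMass w a) :
    (insert i s).centerMass w a ≤ s.centerMass w a := by
  have hwi : 0 < w i := hw i (mem_insert_self i s)
  have hS : 0 < ∑ j ∈ s, w j := sum_pos (fun j hj => hw j (mem_insert_of_mem hj)) hs
  rw [centerMass_insert i s a hi hS.ne', smul_eq_mul, smul_eq_mul, div_mul_eq_mul_div,
    div_mul_eq_mul_div, ← add_div, div_le_iff₀ (by positivity)]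
  nlinarith

end CenterMass

section TailAverage

variable {ι : Type*} [LinearOrder ι] [LocallyFiniteOrderTop ι] [SuccOrder ι]
  [IsSuccArchimedean ι] {w a : ι → ℝ}

lemma centerMass_Ioi_mono (hw : ∀ i, 0 < w i)
    (h : ∀ i, ¬IsMax i → a i ≤ (Ioi i).centerMass w a) {i j : ι} (hij : i ≤ j)
    (hj : ¬IsMax j) : (Ioi i).centerMass w a ≤ (Ioi j).centerMass w a := by
  induction hij using Succ.rec with
  | rfl => exact le_rfl
  | succ n _ ih =>
    have hn : ¬IsMax n := fun hn => hj (hn.mono (Order.le_succ n))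
    have hsplit : Ioi n = insert (Order.succ n) (Ioi (Order.succ n)) := by
      rw [Ioi_insert, Ici_succ_eq_Ioi_of_not_isMax hn]
    calc (Ioi i).centerMass w a ≤ (Ioi n).centerMass w a := ih hn
      _ ≤ (Ioi (Order.succ n)).centerMass w a := by
        rw [hsplit]
        exact centerMass_insert_le notMem_Ioi_self (fun j _ => hw j) (nonempty_Ioi.2 hj) (h _ hj)

lemma centerMass_le_centerMass_Ioi (hw : ∀ i, 0 < w i)
    (h : ∀ i, ¬IsMax i → a i ≤ (Ioi i).centerMass w a) {s : Finset ι} (hs : s.Nonempty) {j : ι}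
    (hsj : ∀ i ∈ s, i ≤ j) (hj : ¬IsMax j) : s.centerMass w a ≤ (Ioi j).centerMass w a :=
  centerMass_le_of_forall_le (fun i _ => hw i) hs fun i hi =>
    (h i fun hmax => hj (hmax.mono (hsj i hi))).trans (centerMass_Ioi_mono hw h (hsj i hi) hj)

variable [Fintype ι] {β : Type*} [LinearOrder β] {v : ι → β}

theorem centerMass_band_le_centerMass_tail_iff (hv : StrictMono v) (hw : ∀ i, 0 < w i) :
    (∀ x y : β, x < y → 0 < ∑ j ∈ univ.filter (fun j => x ≤ v j ∧ v j < y), w j →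
      0 < ∑ j ∈ univ.filter (fun j => y ≤ v j), w j →
      (univ.filter (fun j => x ≤ v j ∧ v j < y)).centerMass w a
        ≤ (univ.filter (fun j => y ≤ v j)).centerMass w a)
    ↔ ∀ i, ¬IsMax i → a i ≤ (Ioi i).centerMass w a := by
  constructor
  · intro hC2 i hi
    have hband : univ.filter (fun j => v i ≤ v j ∧ v j < v (Order.succ i)) = {i} := by
      ext j
      simp [hv.le_iff_le, hv.lt_iff_lt, Order.lt_succ_iff_of_not_isMax hi, le_antisymm_iff,
        and_comm]
    have htail : univ.filter (fun j => v (Order.succ i) ≤ v j) = Ioi i := by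
      ext j
      simp [hv.le_iff_le, Order.succ_le_iff_of_not_isMax hi]
    have := hC2 (v i) (v (Order.succ i)) (hv (Order.lt_succ_of_not_isMax hi))
      (by rw [hband, sum_singleton]; exact hw i)
      (by rw [htail]; exact sum_pos (fun j _ => hw j) (nonempty_Ioi.2 hi))
    rwa [hband, htail, centerMass_singleton _ _ (hw i).ne'] at this
  · intro h x y _ hband htail
    set F := univ.filter (fun j => x ≤ v j ∧ v j < y)
    have hF : F.Nonempty := nonempty_of_sum_ne_zero hband.ne'
    obtain ⟨hxi, hiy⟩ : x ≤ v (F.max' hF) ∧ v (F.max' hF) < y := (mem_filter.1 (F.max'_mem hF)).2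
    have hG : univ.filter (fun j => y ≤ v j) = Ioi (F.max' hF) := by
      ext j
      simp only [mem_filter, mem_univ, true_and, mem_Ioi]
      refine ⟨fun hyj => hv.lt_iff_lt.1 (hiy.trans_le hyj), fun hij => ?_⟩
      by_contra! hjy
      have hjF : j ∈ F := mem_filter.2 ⟨mem_univ j, hxi.trans (hv.monotone hij.le), hjy⟩
      exact (F.le_max' j hjF).not_gt hij
    rw [hG] at htail ⊢
    exact centerMass_le_centerMass_Ioi hw h hF (F.le_max' · ·)
      (nonempty_Ioi.1 (nonempty_of_sum_ne_zero htail.ne'))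

end TailAverage

section Levels

variable {Ω ι β : Type*} [Fintype Ω] [Fintype ι] {c : Ω → β} {v : ι → β}

lemma sum_ite_comp_eq_sum_levels (hv : Function.Injective v) (hrange : ∀ ω, ∃ i, c ω = v i)
    (g : Ω → ℝ) (Q : β → Prop) [DecidablePred Q] :
    (∑ ω, if Q (c ω) then g ω else 0)
      = ∑ j ∈ univ.filter (fun j => Q (v j)), ∑ ω, if c ω = v j then g ω else 0 := by
  rw [sum_comm]
  refine sum_congr rfl fun ω _ => ?_
  obtain ⟨i, hi⟩ := hrange ω
  simp only [hi, hv.eq_iff, sum_ite_eq, mem_filter, mem_univ, true_and]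

lemma pr_comp_eq_sum_levels (p : Ω → ℝ) (hv : Function.Injective v) (hrange : ∀ ω, ∃ i, c ω = v i)
    (Q : β → Prop) [DecidablePred Q] :
    pr p (fun ω => Q (c ω)) = ∑ j ∈ univ.filter (fun j => Q (v j)), pr p (fun ω => c ω = v j) := by
  unfold pr
  convert sum_ite_comp_eq_sum_levels hv hrange p Q

lemma cexp_comp_eq_centerMass (p acc : Ω → ℝ) (hv : Function.Injective v)
    (hrange : ∀ ω, ∃ i, c ω = v i) (hlevel : ∀ i, pr p (fun ω => c ω = v i) ≠ 0)
    (Q : β → Prop) [DecidablePred Q] :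
    cexp p acc (fun ω => Q (c ω)) = (univ.filter (fun j => Q (v j))).centerMass
      (fun j => pr p (fun ω => c ω = v j)) (fun j => cexp p acc (fun ω => c ω = v j)) := by
  have hnum : ∀ j, pr p (fun ω => c ω = v j) * cexp p acc (fun ω => c ω = v j)
      = ∑ ω, if c ω = v j then p ω * acc ω else 0 := fun j => mul_div_cancel₀ _ (hlevel j)
  rw [cexp, pr_comp_eq_sum_levels p hv hrange Q, centerMass, div_eq_inv_mul]
  simp only [smul_eq_mul, hnum]
  congr 1
  convert sum_ite_comp_eq_sum_levels hv hrange (fun ω => p ω * acc ω) Q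

end Levels

section NoInversionZones

variable {Ω ι : Type*} [Fintype Ω]

/-- Condition C2: no band `[a, b)` of confidence values is more accurate than the region `b ≤ c`. -/
def NoInversionZones (p acc c : Ω → ℝ) : Prop :=
  ∀ a b : ℝ, a < b → 0 < pr p (fun ω => a ≤ c ω ∧ c ω < b) → 0 < pr p (fun ω => b ≤ c ω) →
    cexp p acc (fun ω => a ≤ c ω ∧ c ω < b) ≤ cexp p acc (fun ω => b ≤ c ω)

lemma noInversionZones_iff [Fintype ι] [LinearOrder ι] [LocallyFiniteOrderTop ι] [SuccOrder ι]
    [IsSuccArchimedean ι] {p acc c : Ω → ℝ} {v : ι → ℝ} (hv : StrictMono v)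
    (hrange : ∀ ω, ∃ i, c ω = v i) (hlevel : ∀ i, 0 < pr p (fun ω => c ω = v i)) :
    NoInversionZones p acc c ↔ ∀ i, ¬IsMax i → cexp p acc (fun ω => c ω = v i)
      ≤ (Ioi i).centerMass (fun j => pr p (fun ω => c ω = v j))
          (fun j => cexp p acc (fun ω => c ω = v j)) := by
  have hcexp := cexp_comp_eq_centerMass p acc hv.injective hrange (fun i => (hlevel i).ne')
  have hpr := pr_comp_eq_sum_levels p hv.injective hrange
  rw [← centerMass_band_le_centerMass_tail_iff hv hlevel]
  refine forall₂_congr fun x y => ?_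
  rw [hcexp (fun t => x ≤ t ∧ t < y), hcexp (y ≤ ·), hpr (fun t => x ≤ t ∧ t < y), hpr (y ≤ ·)]

end NoInversionZones

lemma Fin.not_isMax_iff_add_one_lt {k : ℕ} (i : Fin k) : ¬IsMax i ↔ (i : ℕ) + 1 < k := by
  rw [not_isMax_iff]
  refine ⟨fun ⟨j, hij⟩ => by omega, fun h => ⟨⟨i + 1, h⟩, Fin.lt_def.2 (by simp)⟩⟩

theorem c2_level_set_characterization_general {Ω : Type*} [Fintype Ω] {k : ℕ}
    (p acc c : Ω → ℝ) (v : Fin k → ℝ)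
    (hv : StrictMono v) (hrange : ∀ ω, ∃ i, c ω = v i)
    (hlevel : ∀ i, 0 < pr p (fun ω => c ω = v i)) :
    ((∀ a b : ℝ, a < b →
        0 < pr p (fun ω => a ≤ c ω ∧ c ω < b) →
        0 < pr p (fun ω => b ≤ c ω) →
        cexp p acc (fun ω => a ≤ c ω ∧ c ω < b) ≤ cexp p acc (fun ω => b ≤ c ω))
      ↔ (∀ i : Fin k, (i : ℕ) + 1 < k →
          cexp p acc (fun ω => c ω = v i)
            ≤ (∑ j ∈ Finset.univ.filter (fun j => i < j),
                  pr p (fun ω => c ω = v j) * cexp p acc (fun ω => c ω = v j))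
              / (∑ j ∈ Finset.univ.filter (fun j => i < j), pr p (fun ω => c ω = v j))))
    ∧ ((∀ i j : Fin k, i ≤ j →
          cexp p acc (fun ω => c ω = v i) ≤ cexp p acc (fun ω => c ω = v j)) →
        (∀ a b : ℝ, a < b →
          0 < pr p (fun ω => a ≤ c ω ∧ c ω < b) →
          0 < pr p (fun ω => b ≤ c ω) →
          cexp p acc (fun ω => a ≤ c ω ∧ c ω < b) ≤ cexp p acc (fun ω => b ≤ c ω))) := by
  change (NoInversionZones p acc c ↔ _) ∧ (_ → NoInversionZones p acc c)
  rw [noInversionZones_iff hv hrange hlevel]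
  refine ⟨?_, fun hmono i hi => le_centerMass_of_forall_le (fun j _ => hlevel j)
    (nonempty_Ioi.2 hi) fun j hj => hmono i j (mem_Ioi.1 hj).le⟩
  simp only [← Fin.not_isMax_iff_add_one_lt, filter_lt_eq_Ioi, centerMass, smul_eq_mul,
    inv_mul_eq_div]

/-- Discrete characterization of the no-inversion-zones condition C2 in terms of
level-set accuracies: C2 holds iff every level's accuracy is at most the weighted
average accuracy of all strictly higher confidence levels; and monotone level
accuracies are sufficient for C2. -/
theorem c2_level_set_characterization {Ω : Type*} [Fintype Ω] {k : ℕ}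
    (p acc c : Ω → ℝ) (v : Fin k → ℝ)
    (hp : ∀ ω, 0 < p ω) (hsum : ∑ ω, p ω = 1)
    (hacc : ∀ ω, acc ω = 0 ∨ acc ω = 1) (hc : ∀ ω, c ω ∈ Set.Icc (0 : ℝ) 1)
    (hv : StrictMono v) (hrange : ∀ ω, ∃ i, c ω = v i)
    (hlevel : ∀ i, 0 < pr p (fun ω => c ω = v i)) :
    ((∀ a b : ℝ, a < b →
        0 < pr p (fun ω => a ≤ c ω ∧ c ω < b) →
        0 < pr p (fun ω => b ≤ c ω) →
        cexp p acc (fun ω => a ≤ c ω ∧ c ω < b) ≤ cexp p acc (fun ω => b ≤ c ω))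
      ↔ (∀ i : Fin k, (i : ℕ) + 1 < k →
          cexp p acc (fun ω => c ω = v i)
            ≤ (∑ j ∈ Finset.univ.filter (fun j => i < j),
                  pr p (fun ω => c ω = v j) * cexp p acc (fun ω => c ω = v j))
              / (∑ j ∈ Finset.univ.filter (fun j => i < j), pr p (fun ω => c ω = v j))))
    ∧ ((∀ i j : Fin k, i ≤ j →
          cexp p acc (fun ω => c ω = v i) ≤ cexp p acc (fun ω => c ω = v j)) →
        (∀ a b : ℝ, a < b →
          0 < pr p (fun ω => a ≤ c ω ∧ c ω < b) →
          0 < pr p (fun ω => b ≤ c ω) →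
          cexp p acc (fun ω => a ≤ c ω ∧ c ω < b) ≤ cexp p acc (fun ω => b ≤ c ω))) :=
  c2_level_set_characterization_general p acc c v hv hrange hlevel
end

section
/- Let (Ω, P) be a probability space, acc : Ω → {0,1}, c : Ω → [0,1], and suppose C2 holds. Then for any thresholds t₁ < t₂ with P(c ≥ t₂) > 0, the accuracy gain from tightening the gate satisfies SA(t₂) − SA(t₁) = (1 − φ(t₂)/φ(t₁)) · (SA(t₂) − E[acc | t₁ ≤ c < t₂]) ≥ 0 whenever P(t₁ ≤ c < t₂) > 0, and the gain is zero if and only if E[acc | t₁ ≤ c < t₂] = SA(t₂). -/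
/-!
The lower gate `{t₁ ≤ c}` is the disjoint union of the dropped band `{t₁ ≤ c < t₂}`, of mass `a`,
and the retained tail `{t₂ ≤ c}`, of mass `b = φ(t₂)`. So `SA(t₁)` is the mean of the band average
`x` and of `y = SA(t₂)` with weights `a / (a + b)` and `b / (a + b) = φ(t₂) / φ(t₁)`, whence
`y - SA(t₁) = (1 - φ(t₂) / φ(t₁)) * (y - x)`; C2 says exactly that `x ≤ y`.
-/

open MeasureTheory

/-- Coverage: probability of confidence at least `t`. -/
noncomputable def phi {Ω : Type*} [MeasurableSpace Ω] (P : Measure Ω) (c : Ω → ℝ) (t : ℝ) : ℝ :=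
  (P {ω | t ≤ c ω}).toReal

theorem sub_weighted_mean_eq {a b : ℝ} (hab : a + b ≠ 0) (x y : ℝ) :
    y - (a / (a + b) * x + b / (a + b) * y) = (1 - b / (a + b)) * (y - x) := by
  field_simp
  ring

theorem sub_weighted_mean_of_le {a b x y : ℝ} (ha : 0 < a) (hb : 0 < b) (hxy : x ≤ y) :
    (y - (a / (a + b) * x + b / (a + b) * y) = (1 - b / (a + b)) * (y - x))
      ∧ 0 ≤ y - (a / (a + b) * x + b / (a + b) * y)
      ∧ (y - (a / (a + b) * x + b / (a + b) * y) = 0 ↔ x = y) := by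
  have hweight : 0 < 1 - b / (a + b) := by
    rw [sub_pos, div_lt_one (by positivity)]
    linarith
  rw [sub_weighted_mean_eq (by positivity)]
  refine ⟨rfl, mul_nonneg hweight.le (sub_nonneg.mpr hxy), ?_⟩
  rw [mul_eq_zero, or_iff_right hweight.ne', sub_eq_zero, eq_comm]

theorem setOf_le_eq_band_union_tail {α β : Type*} [LinearOrder β] (c : α → β) {t₁ t₂ : β}
    (h : t₁ ≤ t₂) :
    {ω | t₁ ≤ c ω} = {ω | t₁ ≤ c ω ∧ c ω < t₂} ∪ {ω | t₂ ≤ c ω} := by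
  ext ω
  simp only [Set.mem_ofPred_eq, Set.mem_union]
  constructor
  · intro h₁
    exact (lt_or_ge (c ω) t₂).imp (⟨h₁, ·⟩) id
  · rintro (⟨h₁, -⟩ | h₂)
    exacts [h₁, h.trans h₂]

theorem disjoint_band_tail {α β : Type*} [LinearOrder β] (c : α → β) (t₁ t₂ : β) :
    Disjoint {ω | t₁ ≤ c ω ∧ c ω < t₂} {ω | t₂ ≤ c ω} :=
  Set.disjoint_left.mpr fun _ hband htail => (not_le.mpr hband.2) htail

theorem integrable_of_forall_eq_zero_or_one {Ω : Type*} [MeasurableSpace Ω] {μ : Measure Ω}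
    [IsFiniteMeasure μ] {f : Ω → ℝ} (hf : Measurable f) (h01 : ∀ ω, f ω = 0 ∨ f ω = 1) :
    Integrable f μ :=
  .of_bound hf.aestronglyMeasurable 1 <| .of_forall fun ω => by rcases h01 ω with h | h <;> simp [h]

theorem confidence_gate_quantitative_general
    {Ω : Type*} [MeasurableSpace Ω] (P : Measure Ω) [IsProbabilityMeasure P]
    (acc c : Ω → ℝ) (hma : Measurable acc) (hmc : Measurable c)
    (hacc : ∀ ω, acc ω = 0 ∨ acc ω = 1)
    (hC2 : ∀ a b : ℝ, a < b →
      0 < P {ω | a ≤ c ω ∧ c ω < b} → 0 < P {ω | b ≤ c ω} →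
      ⨍ ω in {ω | a ≤ c ω ∧ c ω < b}, acc ω ∂P ≤ ⨍ ω in {ω | b ≤ c ω}, acc ω ∂P)
    (t₁ t₂ : ℝ) (ht : t₁ < t₂) (hφ₂ : 0 < P {ω | t₂ ≤ c ω})
    (hband : 0 < P {ω | t₁ ≤ c ω ∧ c ω < t₂}) :
    (SA P acc c t₂ - SA P acc c t₁
        = (1 - phi P c t₂ / phi P c t₁)
            * (SA P acc c t₂ - ⨍ ω in {ω | t₁ ≤ c ω ∧ c ω < t₂}, acc ω ∂P))
      ∧ 0 ≤ SA P acc c t₂ - SA P acc c t₁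
      ∧ (SA P acc c t₂ - SA P acc c t₁ = 0
          ↔ (⨍ ω in {ω | t₁ ≤ c ω ∧ c ω < t₂}, acc ω ∂P) = SA P acc c t₂) := by
  have hsplit := setOf_le_eq_band_union_tail c ht.le
  have hdisj := disjoint_band_tail c t₁ t₂
  set band := {ω | t₁ ≤ c ω ∧ c ω < t₂}
  set tail := {ω | t₂ ≤ c ω}
  have hmtail : MeasurableSet tail := measurableSet_le measurable_const hmc
  have hint : Integrable acc P := integrable_of_forall_eq_zero_or_one hma hacc
  have hphi₁ : phi P c t₁ = P.real band + P.real tail := by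
    rw [phi, hsplit, ← measureReal_def, measureReal_union hdisj hmtail]
  have hSA₁ : SA P acc c t₁
      = P.real band / phi P c t₁ * (⨍ ω in band, acc ω ∂P)
        + phi P c t₂ / phi P c t₁ * SA P acc c t₂ := by
    rw [hphi₁, SA, hsplit, average_union hdisj.aedisjoint hmtail.nullMeasurableSet
      (measure_ne_top _ _) (measure_ne_top _ _) hint.integrableOn hint.integrableOn]
    rfl
  rw [hSA₁, hphi₁]
  exact sub_weighted_mean_of_le (ENNReal.toReal_pos hband.ne' (measure_ne_top _ _))
    (ENNReal.toReal_pos hφ₂.ne' (measure_ne_top _ _)) (hC2 t₁ t₂ ht hband hφ₂)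

/-- Quantitative Confidence Gate Theorem: under C2, the selective accuracy gain from
tightening the gate equals the dropped mass fraction times the accuracy gap between the
retained tail and the dropped band; it is nonnegative, and zero iff the dropped band is
as accurate as the tail. -/
theorem confidence_gate_quantitative
    {Ω : Type*} [MeasurableSpace Ω] (P : Measure Ω) [IsProbabilityMeasure P]
    (acc c : Ω → ℝ) (hma : Measurable acc) (hmc : Measurable c)
    (hacc : ∀ ω, acc ω = 0 ∨ acc ω = 1) (hc : ∀ ω, c ω ∈ Set.Icc (0 : ℝ) 1)
    (hC2 : ∀ a b : ℝ, a < b →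
      0 < P {ω | a ≤ c ω ∧ c ω < b} → 0 < P {ω | b ≤ c ω} →
      ⨍ ω in {ω | a ≤ c ω ∧ c ω < b}, acc ω ∂P ≤ ⨍ ω in {ω | b ≤ c ω}, acc ω ∂P)
    (t₁ t₂ : ℝ) (ht : t₁ < t₂) (hφ₂ : 0 < P {ω | t₂ ≤ c ω})
    (hband : 0 < P {ω | t₁ ≤ c ω ∧ c ω < t₂}) :
    (SA P acc c t₂ - SA P acc c t₁
        = (1 - phi P c t₂ / phi P c t₁)
            * (SA P acc c t₂ - ⨍ ω in {ω | t₁ ≤ c ω ∧ c ω < t₂}, acc ω ∂P))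
      ∧ 0 ≤ SA P acc c t₂ - SA P acc c t₁
      ∧ (SA P acc c t₂ - SA P acc c t₁ = 0
          ↔ (⨍ ω in {ω | t₁ ≤ c ω ∧ c ω < t₂}, acc ω ∂P) = SA P acc c t₂) :=
  confidence_gate_quantitative_general P acc c hma hmc hacc hC2 t₁ t₂ ht hφ₂ hband
end

section
/- Let Ω be a finite set with probability mass p, and let c, acc : Ω → ℝ. Suppose c and acc are comonotone: (c(ω₁) − c(ω₂))·(acc(ω₁) − acc(ω₂)) ≥ 0 for all ω₁, ω₂. Then E[c · acc] ≥ E[c] · E[acc] (Chebyshev's sum/association inequality), and moreover condition C2 holds for the pair (c, acc) when acc takes values in [0,1]. -/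
open scoped Classical BigOperators

/-!
Chebyshev's inequality is the positivity of the symmetrised double sum
`∑ᵢ∑ⱼ pᵢ pⱼ (cⱼ - cᵢ)(accⱼ - accᵢ) = 2 (E[c·acc] - E[c] E[acc])`, each term of which is
nonnegative by comonotonicity. For C2, comonotonicity makes `acc` pointwise smaller on
`{a ≤ c < b}` than on `{b ≤ c}`, and an average over the first event is then at most an
average over the second.
-/

open Finset

section Chebyshev

variable {ι R : Type*} [CommRing R] (s : Finset ι) (w f g : ι → R)

theorem sum_sum_mul_sub_mul_sub :
    ∑ i ∈ s, ∑ j ∈ s, w i * w j * ((f j - f i) * (g j - g i)) =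
      2 * ((∑ i ∈ s, w i) * ∑ i ∈ s, w i * (f i * g i) -
        (∑ i ∈ s, w i * f i) * ∑ i ∈ s, w i * g i) := by
  have inner : ∀ i, ∑ j ∈ s, w i * w j * ((f j - f i) * (g j - g i)) =
      w i * ∑ j ∈ s, w j * (f j * g j) - w i * f i * ∑ j ∈ s, w j * g j -
        w i * g i * ∑ j ∈ s, w j * f j + w i * (f i * g i) * ∑ j ∈ s, w j := by
    intro i
    simp only [mul_sum, ← sum_sub_distrib, ← sum_add_distrib]
    exact sum_congr rfl fun j _ => by ring
  simp only [sum_congr rfl fun i _ => inner i, sum_add_distrib, sum_sub_distrib, ← sum_mul]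
  ring

variable [LinearOrder R] [IsStrictOrderedRing R] {s w f g}

theorem MonovaryOn.sum_mul_sum_le_sum_mul_sum_mul (hw : ∀ i ∈ s, 0 ≤ w i)
    (hfg : MonovaryOn f g s) :
    (∑ i ∈ s, w i * f i) * ∑ i ∈ s, w i * g i ≤
      (∑ i ∈ s, w i) * ∑ i ∈ s, w i * (f i * g i) := by
  have h : 0 ≤ ∑ i ∈ s, ∑ j ∈ s, w i * w j * ((f j - f i) * (g j - g i)) :=
    sum_nonneg fun i hi => sum_nonneg fun j hj =>
      mul_nonneg (mul_nonneg (hw i hi) (hw j hj)) (hfg.sub_mul_sub_nonneg hi hj)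
  rw [sum_sum_mul_sub_mul_sub] at h
  linarith

end Chebyshev

theorem sum_mul_div_sum_le_sum_mul_div_sum {ι K : Type*} [Field K] [LinearOrder K]
    [IsStrictOrderedRing K] {s t : Finset ι} {w f : ι → K} (hws : ∀ i ∈ s, 0 ≤ w i)
    (hwt : ∀ j ∈ t, 0 ≤ w j) (hs : 0 < ∑ i ∈ s, w i) (ht : 0 < ∑ j ∈ t, w j)
    (hf : ∀ i ∈ s, ∀ j ∈ t, f i ≤ f j) :
    (∑ i ∈ s, w i * f i) / ∑ i ∈ s, w i ≤ (∑ j ∈ t, w j * f j) / ∑ j ∈ t, w j := by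
  rw [div_le_div_iff₀ hs ht, sum_mul_sum, sum_mul_sum, sum_comm (s := t)]
  refine sum_le_sum fun i hi => sum_le_sum fun j hj => ?_
  have := mul_le_mul_of_nonneg_left (hf i hi j hj) (mul_nonneg (hws i hi) (hwt j hj))
  linarith

section Conditional

variable {Ω : Type*} [Fintype Ω]

theorem pr_eq_sum_filter (p : Ω → ℝ) (S : Ω → Prop) :
    pr p S = ∑ ω ∈ univ.filter S, p ω :=
  (sum_filter S p).symm

theorem cexp_eq_sum_filter_div (p acc : Ω → ℝ) (S : Ω → Prop) :
    cexp p acc S = (∑ ω ∈ univ.filter S, p ω * acc ω) / ∑ ω ∈ univ.filter S, p ω := by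
  simp only [cexp, pr, sum_filter]

theorem cexp_le_cexp_of_forall_le {p acc : Ω → ℝ} {S T : Ω → Prop} (hp : ∀ ω, 0 ≤ p ω)
    (hS : 0 < pr p S) (hT : 0 < pr p T) (h : ∀ ω ω', S ω → T ω' → acc ω ≤ acc ω') :
    cexp p acc S ≤ cexp p acc T := by
  rw [pr_eq_sum_filter] at hS hT
  rw [cexp_eq_sum_filter_div, cexp_eq_sum_filter_div]
  exact sum_mul_div_sum_le_sum_mul_div_sum (fun ω _ => hp ω) (fun ω _ => hp ω) hS hT
    fun ω hω ω' hω' => h ω ω' (mem_filter.1 hω).2 (mem_filter.1 hω').2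

end Conditional

theorem comonotone_association_and_c2_general {Ω : Type*} [Fintype Ω] (p acc c : Ω → ℝ)
    (hp : ∀ ω, 0 ≤ p ω) (hsum : ∑ ω, p ω = 1)
    (hcomono : ∀ ω₁ ω₂, 0 ≤ (c ω₁ - c ω₂) * (acc ω₁ - acc ω₂)) :
    ((∑ ω, p ω * c ω) * (∑ ω, p ω * acc ω) ≤ ∑ ω, p ω * (c ω * acc ω))
      ∧ (∀ a b : ℝ, a < b →
          0 < pr p (fun ω => a ≤ c ω ∧ c ω < b) →
          0 < pr p (fun ω => b ≤ c ω) →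
          cexp p acc (fun ω => a ≤ c ω ∧ c ω < b) ≤ cexp p acc (fun ω => b ≤ c ω)) := by
  have hc_acc : Monovary c acc := monovary_iff_forall_mul_nonneg.2 fun i j => hcomono j i
  have hacc_c : Monovary acc c :=
    monovary_iff_forall_mul_nonneg.2 fun i j => mul_comm (c j - c i) _ ▸ hcomono j i
  refine ⟨?_, fun a b _ hS hT => ?_⟩
  · simpa only [hsum, one_mul] using (hc_acc.monovaryOn (univ : Finset Ω)).sum_mul_sum_le_sum_mul_sum_mul
      (w := p) fun ω _ => hp ω
  · exact cexp_le_cexp_of_forall_le hp hS hT fun ω ω' hω hω' => hacc_c (hω.2.trans_le hω')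

/-- Comonotone confidence and accuracy have nonnegative covariance (Chebyshev's
association inequality), and when `acc` takes values in `[0,1]` the pair satisfies the
no-inversion-zones condition C2. -/
theorem comonotone_association_and_c2 {Ω : Type*} [Fintype Ω] (p acc c : Ω → ℝ)
    (hp : ∀ ω, 0 ≤ p ω) (hsum : ∑ ω, p ω = 1)
    (hcomono : ∀ ω₁ ω₂, 0 ≤ (c ω₁ - c ω₂) * (acc ω₁ - acc ω₂))
    (hacc : ∀ ω, acc ω ∈ Set.Icc (0 : ℝ) 1) :
    ((∑ ω, p ω * c ω) * (∑ ω, p ω * acc ω) ≤ ∑ ω, p ω * (c ω * acc ω))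
      ∧ (∀ a b : ℝ, a < b →
          0 < pr p (fun ω => a ≤ c ω ∧ c ω < b) →
          0 < pr p (fun ω => b ≤ c ω) →
          cexp p acc (fun ω => a ≤ c ω ∧ c ω < b) ≤ cexp p acc (fun ω => b ≤ c ω)) :=
  comonotone_association_and_c2_general p acc c hp hsum hcomono
end

section
/- Let Y = f + g + ε as above with f, g, ε independent, E[g] = E[ε] = 0, and let the confidence function c be a measurable function of a 'data density' variable N that is independent of g and ε. Suppose the structural error f − f̂ is a function of N with |f(N) − f̂(N)| non-increasing in N, and c is non-decreasing in N. Then the conditional expected squared structural error E[(f − f̂)² | c ≥ t] is non-increasing in t, while the conditional contextual error E[g² | c ≥ t] = Var(g) is constant in t. -/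
/-!
Both gated quantities are averages over `{ω | t ≤ h (N ω)} = N⁻¹' {x | t ≤ h x}`, the preimage
of an upper set since `h` is monotone. Raising `t` removes only points whose density lies below
that of every kept point; there the squared structural error is at least its value anywhere on
the kept set, so the average cannot increase. The event is determined by `N`, hence independent
of `g`, so averaging `g²` over it returns `E[g²]`, which is `Var g` as `E[g] = 0`.
-/

open MeasureTheory ProbabilityTheory Set

section Average

variable {α : Type*} [MeasurableSpace α] {μ : Measure α} [IsFiniteMeasure μ] {f : α → ℝ}
  {s t : Set α}

theorem setAverage_le_setAverage_of_forall_le (hs : MeasurableSet s) (ht : MeasurableSet t)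
    (hs₀ : μ s ≠ 0) (ht₀ : μ t ≠ 0) (hfs : IntegrableOn f s μ) (hft : IntegrableOn f t μ)
    (h : ∀ x ∈ s, ∀ y ∈ t, f x ≤ f y) :
    ⨍ x in s, f x ∂μ ≤ ⨍ x in t, f x ∂μ := by
  obtain ⟨x, hxs, hx⟩ := exists_notMem_null_average_le (by simpa using hs₀) hfs
    (N := sᶜ) (by simp [Measure.restrict_apply hs.compl])
  obtain ⟨y, hyt, hy⟩ := exists_notMem_null_le_average (by simpa using ht₀) hft
    (N := tᶜ) (by simp [Measure.restrict_apply ht.compl])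
  exact hx.trans <| (h x (not_not.1 hxs) y (not_not.1 hyt)).trans hy

theorem setAverage_le_setAverage_of_subset (hs : MeasurableSet s) (ht : MeasurableSet t)
    (hst : s ⊆ t) (hs₀ : μ s ≠ 0) (hf : IntegrableOn f t μ)
    (h : ∀ x ∈ s, ∀ y ∈ t \ s, f x ≤ f y) :
    ⨍ x in s, f x ∂μ ≤ ⨍ x in t, f x ∂μ := by
  rw [← union_sdiff_cancel hst]
  by_cases hd₀ : μ (t \ s) = 0
  · rw [setAverage_congr (Filter.EventuallyEq.rfl.union (ae_eq_empty.2 hd₀)), union_empty]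
  have hle := setAverage_le_setAverage_of_forall_le hs (ht.diff hs) hs₀ hd₀
    (hf.mono_set hst) (hf.mono_set sdiff_subset) h
  exact (segment_subset_Icc hle (average_union_mem_segment disjoint_sdiff_right.aedisjoint
    (ht.diff hs).nullMeasurableSet (measure_ne_top _ _) (measure_ne_top _ _)
    (hf.mono_set hst) (hf.mono_set sdiff_subset))).1

end Average

section Preimage

variable {Ω β γ E : Type*} [MeasurableSpace Ω] {μ : Measure Ω} [IsFiniteMeasure μ]
  [MeasurableSpace β] {N : Ω → β} {U V : Set β}

theorem Antitone.setAverage_comp_le_of_isUpperSet [LinearOrder β] {φ : β → ℝ}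
    (hφ : Antitone φ) (hN : Measurable N) (hU : MeasurableSet U) (hV : MeasurableSet V)
    (hU_upper : IsUpperSet U) (hUV : U ⊆ V) (hU₀ : μ (N ⁻¹' U) ≠ 0)
    (hint : Integrable (fun ω => φ (N ω)) μ) :
    ⨍ ω in N ⁻¹' U, φ (N ω) ∂μ ≤ ⨍ ω in N ⁻¹' V, φ (N ω) ∂μ := by
  refine setAverage_le_setAverage_of_subset (hN hU) (hN hV) (preimage_mono hUV) hU₀
    hint.integrableOn fun x hx y hy => hφ ?_
  by_contra! hxy
  exact hy.2 (hU_upper hxy.le hx)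

theorem ProbabilityTheory.IndepFun.setAverage_preimage_eq_integral [MeasurableSpace γ]
    [NormedAddCommGroup E] [NormedSpace ℝ E] {g : Ω → γ} {f : γ → E} (hind : IndepFun g N μ)
    (hg : AEMeasurable g μ) (hN : Measurable N) (hf : AEStronglyMeasurable f (μ.map g))
    (hU : MeasurableSet U) (hU₀ : μ (N ⁻¹' U) ≠ 0) :
    ⨍ ω in N ⁻¹' U, f (g ω) ∂μ = ∫ ω, f (g ω) ∂μ := by
  have hindep := ((IndepFun_iff_Indep g N μ).1 hind).symm
  rw [setAverage_eq, hindep.setIntegral_eq_smul hN.comap_le hg ⟨U, hU, rfl⟩ hf, smul_smul,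
    inv_mul_cancel₀ ((measureReal_ne_zero_iff).2 hU₀), one_smul]

end Preimage

theorem structural_gating_general
    {Ω : Type*} [MeasurableSpace Ω] (P : Measure Ω) [IsProbabilityMeasure P]
    (N g : Ω → ℝ) (errF h : ℝ → ℝ)
    (hmN : Measurable N) (hmg : Measurable g)
    (hhmono : Monotone h)
    (herr_anti : ∀ x y : ℝ, x ≤ y → |errF y| ≤ |errF x|)
    (hindep : IndepFun g N P)
    (hEg : ∫ ω, g ω ∂P = 0)
    (herr2 : MemLp (fun ω => errF (N ω)) 2 P) :
    (∀ t₁ t₂ : ℝ, t₁ ≤ t₂ → 0 < P {ω | t₂ ≤ h (N ω)} →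
        ⨍ ω in {ω | t₂ ≤ h (N ω)}, (errF (N ω)) ^ 2 ∂P
          ≤ ⨍ ω in {ω | t₁ ≤ h (N ω)}, (errF (N ω)) ^ 2 ∂P)
      ∧ (∀ t : ℝ, 0 < P {ω | t ≤ h (N ω)} →
          ⨍ ω in {ω | t ≤ h (N ω)}, (g ω) ^ 2 ∂P = variance g P) := by
  have hupper (t : ℝ) : IsUpperSet {x | t ≤ h x} := fun _ _ hxy hx => hx.trans (hhmono hxy)
  have hmeas (t : ℝ) : MeasurableSet {x | t ≤ h x} := (hupper t).ordConnected.measurableSet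
  have herr_sq_anti : Antitone fun x => errF x ^ 2 := fun x y hxy => by
    simpa only [sq_abs] using pow_le_pow_left₀ (abs_nonneg _) (herr_anti x y hxy) 2
  refine ⟨fun t₁ t₂ ht hpos => ?_, fun t hpos => ?_⟩
  · exact herr_sq_anti.setAverage_comp_le_of_isUpperSet (μ := P) (U := {x | t₂ ≤ h x})
      (V := {x | t₁ ≤ h x}) hmN (hmeas t₂) (hmeas t₁) (hupper t₂) (fun _ hx => ht.trans hx)
      hpos.ne' herr2.integrable_sq
  · rw [variance_of_integral_eq_zero hmg.aemeasurable hEg]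
    exact hindep.setAverage_preimage_eq_integral (f := fun x => x ^ 2) (U := {x | t ≤ h x})
      hmg.aemeasurable hmN (continuous_pow 2).aestronglyMeasurable (hmeas t) hpos.ne'

/-- Structural gating: if confidence is a monotone function of a data-density variable
`N` independent of the contextual term `g`, and the (absolute) structural error is
non-increasing in `N`, then conditioning on higher confidence monotonically reduces the
expected squared structural error while leaving the contextual error `E[g² | c ≥ t] =
Var(g)` constant. -/
theorem structural_gating
    {Ω : Type*} [MeasurableSpace Ω] (P : Measure Ω) [IsProbabilityMeasure P]
    (N g : Ω → ℝ) (errF h : ℝ → ℝ)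
    (hmN : Measurable N) (hmg : Measurable g)
    (hmerr : Measurable errF) (hmh : Measurable h)
    (hhmono : Monotone h)
    (herr_anti : ∀ x y : ℝ, x ≤ y → |errF y| ≤ |errF x|)
    (hindep : IndepFun g N P)
    (hEg : ∫ ω, g ω ∂P = 0) (hg2 : MemLp g 2 P)
    (herr2 : MemLp (fun ω => errF (N ω)) 2 P) :
    (∀ t₁ t₂ : ℝ, t₁ ≤ t₂ → 0 < P {ω | t₂ ≤ h (N ω)} →
        ⨍ ω in {ω | t₂ ≤ h (N ω)}, (errF (N ω)) ^ 2 ∂P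
          ≤ ⨍ ω in {ω | t₁ ≤ h (N ω)}, (errF (N ω)) ^ 2 ∂P)
      ∧ (∀ t : ℝ, 0 < P {ω | t ≤ h (N ω)} →
          ⨍ ω in {ω | t ≤ h (N ω)}, (g ω) ^ 2 ∂P = variance g P) :=
  structural_gating_general P N g errF h hmN hmg hhmono herr_anti hindep hEg herr2
end

section
/- Let Ω be a finite probability space, acc : Ω → {0,1}, and let c₁, c₂ : Ω → [0,1] be two confidence functions that induce the same ordering of Ω (c₁(ω) > c₁(ω') iff c₂(ω) > c₂(ω')). Then C2 holds for c₁ if and only if C2 holds for c₂, and the set of achievable (coverage, selective accuracy) pairs {(φ(t), SA(t)) : t ∈ [0,1], φ(t) > 0} is the same for both confidence functions. -/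
open scoped Classical BigOperators

/-- The no-inversion-zones condition C2 for a confidence function `c`. -/
def C2 {Ω : Type*} [Fintype Ω] (p acc c : Ω → ℝ) : Prop :=
  ∀ a b : ℝ, a < b →
    0 < pr p (fun ω => a ≤ c ω ∧ c ω < b) →
    0 < pr p (fun ω => b ≤ c ω) →
    cexp p acc (fun ω => a ≤ c ω ∧ c ω < b) ≤ cexp p acc (fun ω => b ≤ c ω)

/-- The achievable (coverage, selective accuracy) pairs of a confidence function. -/
def curve {Ω : Type*} [Fintype Ω] (p acc c : Ω → ℝ) : Set (ℝ × ℝ) :=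
  {q | ∃ t ∈ Set.Icc (0 : ℝ) 1, 0 < pr p (fun ω => t ≤ c ω) ∧
    q = (pr p (fun ω => t ≤ c ω), cexp p acc (fun ω => t ≤ c ω))}

/-!
On a finite space every nonempty superlevel set `{t ≤ c₁}` is `{c₁ m ≤ c₁}` for a minimiser `m`
of `c₁` on it, and since `c₁` and `c₂` order `Ω` alike this is the superlevel set `{c₂ m ≤ c₂}`.
Condition C2 and the curve only involve superlevel sets of positive mass and differences of two of
them, so every instance for `c₁` is an instance for `c₂` at thresholds taken among the values of
`c₂`, which lie in `[0, 1]`.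
-/

lemma exists_of_pr_ne_zero {Ω : Type*} [Fintype Ω] {p : Ω → ℝ} {S : Ω → Prop}
    (h : pr p S ≠ 0) : ∃ ω, S ω := by
  obtain ⟨ω, -, hω⟩ := Finset.exists_ne_zero_of_sum_ne_zero h
  exact ⟨ω, of_not_not fun hS => hω (if_neg hS)⟩

lemma exists_le_iff_le_of_lt_iff_lt {Ω β γ : Type*} [Finite Ω] [LinearOrder β] [LinearOrder γ]
    {c₁ : Ω → β} {c₂ : Ω → γ} (horder : ∀ ω ω', c₁ ω' < c₁ ω ↔ c₂ ω' < c₂ ω) {t : β}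
    (h : ∃ ω, t ≤ c₁ ω) : ∃ m, ∀ ω, t ≤ c₁ ω ↔ c₂ m ≤ c₂ ω := by
  have : Nonempty {ω // t ≤ c₁ ω} := let ⟨ω, hω⟩ := h; ⟨⟨ω, hω⟩⟩
  obtain ⟨⟨m, hm⟩, hmin⟩ := Finite.exists_min fun ω : {ω // t ≤ c₁ ω} => c₁ ω
  refine ⟨m, fun ω => ?_⟩
  calc t ≤ c₁ ω ↔ c₁ m ≤ c₁ ω := ⟨fun hω => hmin ⟨ω, hω⟩, hm.trans⟩
    _ ↔ c₂ m ≤ c₂ ω := by simpa only [not_lt] using (horder m ω).not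

section

variable {Ω : Type*} [Fintype Ω] {p acc c₁ c₂ : Ω → ℝ}

theorem C2.of_lt_iff_lt (horder : ∀ ω ω', c₁ ω' < c₁ ω ↔ c₂ ω' < c₂ ω) (h : C2 p acc c₂) :
    C2 p acc c₁ := by
  intro a b _ hband hupper
  obtain ⟨ωA, haA, hbA⟩ := exists_of_pr_ne_zero hband.ne'
  obtain ⟨mA, hmA⟩ := exists_le_iff_le_of_lt_iff_lt horder ⟨ωA, haA⟩
  obtain ⟨mB, hmB⟩ := exists_le_iff_le_of_lt_iff_lt horder (exists_of_pr_ne_zero hupper.ne')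
  have hband_eq : (fun ω => a ≤ c₁ ω ∧ c₁ ω < b) = fun ω => c₂ mA ≤ c₂ ω ∧ c₂ ω < c₂ mB :=
    funext fun ω => propext <| and_congr (hmA ω) (not_le.symm.trans <| (hmB ω).not.trans not_le)
  have hupper_eq : (fun ω => b ≤ c₁ ω) = fun ω => c₂ mB ≤ c₂ ω :=
    funext fun ω => propext (hmB ω)
  have hlt : c₂ mA < c₂ mB :=
    ((hmA ωA).1 haA).trans_lt (not_le.1 fun hB => (hmB ωA).2 hB |>.not_gt hbA)
  rw [hband_eq] at hband ⊢
  rw [hupper_eq] at hupper ⊢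
  exact h _ _ hlt hband hupper

theorem curve_subset_of_lt_iff_lt (horder : ∀ ω ω', c₁ ω' < c₁ ω ↔ c₂ ω' < c₂ ω)
    (hc₂ : ∀ ω, c₂ ω ∈ Set.Icc (0 : ℝ) 1) : curve p acc c₁ ⊆ curve p acc c₂ := by
  rintro q ⟨t, -, hpos, rfl⟩
  obtain ⟨m, hm⟩ := exists_le_iff_le_of_lt_iff_lt horder (exists_of_pr_ne_zero hpos.ne')
  have hupper_eq : (fun ω => t ≤ c₁ ω) = fun ω => c₂ m ≤ c₂ ω := funext fun ω => propext (hm ω)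
  rw [hupper_eq] at hpos ⊢
  exact ⟨c₂ m, hc₂ m, hpos, rfl⟩

end

theorem rank_invariance_general {Ω : Type*} [Fintype Ω] (p acc c₁ c₂ : Ω → ℝ)
    (hc₁ : ∀ ω, c₁ ω ∈ Set.Icc (0 : ℝ) 1) (hc₂ : ∀ ω, c₂ ω ∈ Set.Icc (0 : ℝ) 1)
    (horder : ∀ ω ω', c₁ ω' < c₁ ω ↔ c₂ ω' < c₂ ω) :
    (C2 p acc c₁ ↔ C2 p acc c₂) ∧ curve p acc c₁ = curve p acc c₂ := by
  have horder_symm : ∀ ω ω', c₂ ω' < c₂ ω ↔ c₁ ω' < c₁ ω := fun ω ω' => (horder ω ω').symm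
  exact ⟨⟨C2.of_lt_iff_lt horder_symm, C2.of_lt_iff_lt horder⟩,
    (curve_subset_of_lt_iff_lt horder hc₂).antisymm (curve_subset_of_lt_iff_lt horder_symm hc₁)⟩

/-- Invariance under monotone reparametrization: two confidence functions inducing the
same ordering have C2 simultaneously and realize the same coverage–selective-accuracy
trade-off. -/
theorem rank_invariance {Ω : Type*} [Fintype Ω] (p acc c₁ c₂ : Ω → ℝ)
    (hp : ∀ ω, 0 < p ω) (hsum : ∑ ω, p ω = 1)
    (hacc : ∀ ω, acc ω = 0 ∨ acc ω = 1)
    (hc₁ : ∀ ω, c₁ ω ∈ Set.Icc (0 : ℝ) 1) (hc₂ : ∀ ω, c₂ ω ∈ Set.Icc (0 : ℝ) 1)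
    (horder : ∀ ω ω', c₁ ω' < c₁ ω ↔ c₂ ω' < c₂ ω) :
    (C2 p acc c₁ ↔ C2 p acc c₂) ∧ curve p acc c₁ = curve p acc c₂ :=
  rank_invariance_general p acc c₁ c₂ hc₁ hc₂ horder
end
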